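/- arXiv:0903.2925 — 4 statements merged into one kernel-verified Lean document; each statement's English description precedes it below -/
import Mathlib

section
/- Let G be a group acting on a set X, and let L^∞(X,ℤ) denote bounded integer-valued functions on X with the induced G-action. For every ℤG-module M there is a natural isomorphism (L^∞(X,ℤ) ⋊ G) ⊗_{ℤG} M ≅ L^∞(X,ℤ) ⊗_ℤ M of abelian groups. Consequently, since L^∞(X,ℤ) is torsion-free as an abelian group, the crossed product ring L^∞(X,ℤ) ⋊ G is flat as a right ℤG-module. -/
open scoped TensorProduct

/-- The abelian group `L^∞(X,ℤ)` of bounded integer-valued functions on `X`. -/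
def boundedZ (X : Type*) : AddSubgroup (X → ℤ) where
  carrier := {f | ∃ N : ℤ, ∀ x, |f x| ≤ N}
  add_mem' := by
    rintro f g ⟨N, hN⟩ ⟨M, hM⟩
    exact ⟨N + M, fun x => (abs_add_le _ _).trans (add_le_add (hN x) (hM x))⟩
  zero_mem' := ⟨0, by simp⟩
  neg_mem' := by
    rintro f ⟨N, hN⟩
    exact ⟨N, fun x => by simpa using hN x⟩

/-- The crossed product `L^∞(X,ℤ) ⋊ G`, i.e. the free `L^∞(X,ℤ)`-module on `G`.  Its right
`ℤG`-module structure is given by right translation of the `G`-coordinate. -/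
def CrossedProd (X G : Type*) : Type _ := G →₀ (boundedZ X)

noncomputable instance (X G : Type*) : AddCommGroup (CrossedProd X G) :=
  inferInstanceAs (AddCommGroup (G →₀ (boundedZ X)))

/-- Right multiplication by `g ∈ G ⊆ ℤG` on the crossed product `L^∞(X,ℤ) ⋊ G`:
`(r·h)·g = r·(hg)`. -/
noncomputable def rTrans {X G : Type*} [Group G] (g : G) (s : CrossedProd X G) :
    CrossedProd X G :=
  Finsupp.mapDomain (fun h => h * g) s

/-- The subgroup of relations defining the balanced tensor product
`(L^∞(X,ℤ) ⋊ G) ⊗_{ℤG} M` as a quotient of `(L^∞(X,ℤ) ⋊ G) ⊗_ℤ M`. -/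
noncomputable def crossedRel (X : Type*) (G : Type*) [Group G] (M : Type*)
    [AddCommGroup M] [DistribMulAction G M] :
    Submodule ℤ (CrossedProd X G ⊗[ℤ] M) :=
  Submodule.span ℤ
    {x | ∃ (s : CrossedProd X G) (g : G) (m : M), x = rTrans g s ⊗ₜ[ℤ] m - s ⊗ₜ[ℤ] (g • m)}

/-- The balanced tensor product `(L^∞(X,ℤ) ⋊ G) ⊗_{ℤG} M`. -/
noncomputable def crossedTensor (X : Type*) (G : Type*) [Group G] (M : Type*)
    [AddCommGroup M] [DistribMulAction G M] : Type _ :=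
  (CrossedProd X G ⊗[ℤ] M) ⧸ crossedRel X G M

noncomputable instance (X : Type*) (G : Type*) [Group G] (M : Type*) [AddCommGroup M]
    [DistribMulAction G M] : AddCommGroup (crossedTensor X G M) :=
  inferInstanceAs (AddCommGroup ((CrossedProd X G ⊗[ℤ] M) ⧸ crossedRel X G M))

/-!
Every element of `L^∞(X,ℤ) ⋊ G` is a sum of elements `a·g = (a·1)·g`, so in the balanced tensor
product `(a·g) ⊗ m = (a·1) ⊗ g m`: everything is pushed into the copy `L^∞(X,ℤ)·1 ⊗ M`. Conversely
`(a·g) ⊗ m ↦ a ⊗ g m` respects the balancing relations, which gives the inverse isomorphism.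
Under these isomorphisms the map induced by `φ : M → N` becomes `L^∞(X,ℤ) ⊗ φ`, which is injective
because `L^∞(X,ℤ)` is torsion-free, hence flat over the principal ideal domain `ℤ`.
-/

namespace CrossedProd

variable {X G : Type*}

/-- The element `a·g` of the crossed product. -/
noncomputable def single (g : G) (a : boundedZ X) : CrossedProd X G := Finsupp.single g a

@[elab_as_elim]
lemma induction_on {p : CrossedProd X G → Prop} (s : CrossedProd X G) (zero : p 0)
    (add : ∀ s t, p s → p t → p (s + t)) (single : ∀ g a, p (single g a)) : p s :=
  Finsupp.induction_linear s zero add single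

variable [Group G]

lemma rTrans_single (g h : G) (a : boundedZ X) : rTrans g (single h a) = single (h * g) a :=
  Finsupp.mapDomain_single

lemma rTrans_zero (g : G) : rTrans g (0 : CrossedProd X G) = 0 :=
  Finsupp.mapDomain_zero

lemma rTrans_add (g : G) (s t : CrossedProd X G) : rTrans g (s + t) = rTrans g s + rTrans g t :=
  Finsupp.mapDomain_add

end CrossedProd

open CrossedProd

namespace crossedTensor

variable {X G : Type*} [Group G] {M : Type*} [AddCommGroup M] [DistribMulAction G M]

lemma mk_rTrans_tmul (g : G) (s : CrossedProd X G) (m : M) :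
    (Submodule.Quotient.mk (rTrans g s ⊗ₜ m) : crossedTensor X G M) =
      Submodule.Quotient.mk (s ⊗ₜ (g • m)) :=
  (Submodule.Quotient.eq _).2 (Submodule.subset_span ⟨s, g, m, rfl⟩)

variable (X G M) in
noncomputable def collapse : CrossedProd X G ⊗[ℤ] M →ₗ[ℤ] boundedZ X ⊗[ℤ] M :=
  TensorProduct.lift <| AddMonoidHom.toIntLinearMap <| (Finsupp.liftAddHom fun g =>
    ((TensorProduct.mk ℤ (boundedZ X) M).compl₂ (DistribSMul.toLinearMap ℤ M g)).toAddMonoidHom :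
      CrossedProd X G →+ M →ₗ[ℤ] boundedZ X ⊗[ℤ] M)

lemma collapse_single_tmul (g : G) (a : boundedZ X) (m : M) :
    collapse X G M (single g a ⊗ₜ m) = a ⊗ₜ (g • m) := by
  unfold collapse single
  -- `erw`: the lemmas are stated for the `Finsupp` instances, not those of the synonym `CrossedProd`
  erw [TensorProduct.lift.tmul, Finsupp.liftAddHom_apply_single]
  rfl

lemma collapse_rTrans_tmul (g : G) (s : CrossedProd X G) (m : M) :
    collapse X G M (rTrans g s ⊗ₜ m) = collapse X G M (s ⊗ₜ (g • m)) := by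
  induction s using CrossedProd.induction_on with
  | zero => rw [rTrans_zero, TensorProduct.zero_tmul, TensorProduct.zero_tmul]
  | add s t hs ht =>
    rw [rTrans_add, TensorProduct.add_tmul, TensorProduct.add_tmul, map_add, map_add, hs, ht]
  | single h a => simp [rTrans_single, collapse_single_tmul, mul_smul]

lemma crossedRel_le_ker_collapse : crossedRel X G M ≤ LinearMap.ker (collapse X G M) := by
  rw [crossedRel, Submodule.span_le]
  rintro _ ⟨s, g, m, rfl⟩
  simp [collapse_rTrans_tmul]

variable (X G M) in
noncomputable def expand : boundedZ X ⊗[ℤ] M →ₗ[ℤ] crossedTensor X G M :=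
  TensorProduct.lift <| LinearMap.compr₂
    ((TensorProduct.mk ℤ (CrossedProd X G) M).comp
      (Finsupp.singleAddHom 1 : boundedZ X →+ CrossedProd X G).toIntLinearMap)
    (crossedRel X G M).mkQ

lemma expand_tmul (a : boundedZ X) (m : M) :
    expand X G M (a ⊗ₜ m) = Submodule.Quotient.mk (single 1 a ⊗ₜ m) :=
  rfl

variable (X G M) in
noncomputable def descend : crossedTensor X G M →ₗ[ℤ] boundedZ X ⊗[ℤ] M :=
  (crossedRel X G M).liftQ (collapse X G M) crossedRel_le_ker_collapse

lemma descend_mk (z : CrossedProd X G ⊗[ℤ] M) :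
    descend X G M (Submodule.Quotient.mk z) = collapse X G M z :=
  rfl

lemma descend_expand (z : boundedZ X ⊗[ℤ] M) : descend X G M (expand X G M z) = z := by
  induction z using TensorProduct.induction_on with
  | zero => rw [map_zero, map_zero]
  | add z w hz hw => rw [map_add, map_add, hz, hw]
  | tmul a m => rw [expand_tmul, descend_mk, collapse_single_tmul, one_smul]

lemma expand_collapse (z : CrossedProd X G ⊗[ℤ] M) :
    expand X G M (collapse X G M z) = Submodule.Quotient.mk z := by
  -- each `rfl` identifies the operations of `crossedTensor` with those of the underlying quotient
  induction z using TensorProduct.induction_on with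
  | zero => rw [map_zero, map_zero]; rfl
  | add z w hz hw => rw [map_add, map_add, hz, hw]; rfl
  | tmul s m =>
    induction s using CrossedProd.induction_on with
    | zero => rw [TensorProduct.zero_tmul, map_zero, map_zero]; rfl
    | add s t hs ht => rw [TensorProduct.add_tmul, map_add, map_add, hs, ht]; rfl
    | single g a =>
      rw [collapse_single_tmul, expand_tmul, ← mk_rTrans_tmul, rTrans_single, one_mul]

lemma expand_descend (q : crossedTensor X G M) : expand X G M (descend X G M q) = q := by
  obtain ⟨z, rfl⟩ := Submodule.Quotient.mk_surjective _ q
  exact expand_collapse z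

variable (X G M) in
noncomputable def collapseEquiv : crossedTensor X G M ≃ₗ[ℤ] boundedZ X ⊗[ℤ] M where
  __ := descend X G M
  invFun := expand X G M
  left_inv := expand_descend
  right_inv := descend_expand

lemma collapseEquiv_mk_single_tmul (g : G) (a : boundedZ X) (m : M) :
    collapseEquiv X G M (Submodule.Quotient.mk (single g a ⊗ₜ m)) = a ⊗ₜ (g • m) :=
  collapse_single_tmul g a m

lemma collapseEquiv_symm_tmul (a : boundedZ X) (m : M) :
    (collapseEquiv X G M).symm (a ⊗ₜ m) = Submodule.Quotient.mk (single 1 a ⊗ₜ m) :=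
  rfl

theorem injective_of_map_mk_tmul {N : Type*} [AddCommGroup N] [DistribMulAction G N] {φ : M →+ N}
    (hφ : Function.Injective φ) (F : crossedTensor X G M →+ crossedTensor X G N)
    (hF : ∀ s m, F (Submodule.Quotient.mk (s ⊗ₜ m)) = Submodule.Quotient.mk (s ⊗ₜ φ m)) :
    Function.Injective F := by
  set φ' := φ.toIntLinearMap
  have hconj : ∀ z, collapseEquiv X G N (F ((collapseEquiv X G M).symm z)) = φ'.lTensor _ z := by
    intro z
    induction z using TensorProduct.induction_on with
    | zero => simp
    | add z w hz hw => simp [hz, hw]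
    | tmul a m =>
      rw [collapseEquiv_symm_tmul, hF, collapseEquiv_mk_single_tmul, one_smul,
        LinearMap.lTensor_tmul, AddMonoidHom.coe_toIntLinearMap]
  have hF_eq : ⇑F = (collapseEquiv X G N).symm ∘ φ'.lTensor _ ∘ collapseEquiv X G M := by
    ext q
    simp [← hconj]
  rw [hF_eq]
  exact (collapseEquiv X G N).symm.injective.comp <|
    (Module.Flat.lTensor_preserves_injective_linearMap φ' hφ).comp (collapseEquiv X G M).injective

end crossedTensor

theorem stmt_4_general (X : Type*) (G : Type*) [Group G] :
    (∀ (M : Type) [AddCommGroup M] [DistribMulAction G M],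
      Nonempty (crossedTensor X G M ≃+ ((boundedZ X) ⊗[ℤ] M))) ∧
    (∀ (M N : Type) [AddCommGroup M] [DistribMulAction G M]
      [AddCommGroup N] [DistribMulAction G N]
      (φ : M →+ N), (∀ (g : G) (m : M), φ (g • m) = g • φ m) → Function.Injective φ →
      ∀ (F : crossedTensor X G M →+ crossedTensor X G N),
        (∀ (s : CrossedProd X G) (m : M),
          F (Submodule.Quotient.mk (s ⊗ₜ[ℤ] m)) = Submodule.Quotient.mk (s ⊗ₜ[ℤ] φ m)) →
        Function.Injective F) :=
  ⟨fun M _ _ => ⟨(crossedTensor.collapseEquiv X G M).toAddEquiv⟩,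
    fun _ _ _ _ _ _ _ _ hφ F hF => crossedTensor.injective_of_map_mk_tmul hφ F hF⟩

/-- For a group `G` acting on a set `X` and any `ℤG`-module `M` there is an
isomorphism of abelian groups `(L^∞(X,ℤ) ⋊ G) ⊗_{ℤG} M ≅ L^∞(X,ℤ) ⊗_ℤ M`; consequently the
crossed product `L^∞(X,ℤ) ⋊ G` is flat as a right `ℤG`-module: for every injective
`G`-equivariant map `φ : M → N` of `ℤG`-modules, the induced map
`(L^∞(X,ℤ) ⋊ G) ⊗_{ℤG} M → (L^∞(X,ℤ) ⋊ G) ⊗_{ℤG} N` is injective. -/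
theorem stmt_4 (X : Type*) (G : Type*) [Group G] [MulAction G X] :
    (∀ (M : Type) [AddCommGroup M] [DistribMulAction G M],
      Nonempty (crossedTensor X G M ≃+ ((boundedZ X) ⊗[ℤ] M))) ∧
    (∀ (M N : Type) [AddCommGroup M] [DistribMulAction G M]
      [AddCommGroup N] [DistribMulAction G N]
      (φ : M →+ N), (∀ (g : G) (m : M), φ (g • m) = g • φ m) → Function.Injective φ →
      ∀ (F : crossedTensor X G M →+ crossedTensor X G N),
        (∀ (s : CrossedProd X G) (m : M),
          F (Submodule.Quotient.mk (s ⊗ₜ[ℤ] m)) = Submodule.Quotient.mk (s ⊗ₜ[ℤ] φ m)) →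
        Function.Injective F) :=
  stmt_4_general X G
end

section
/- Let R be a ring and p ∈ R a full idempotent. Then for any left R-module P, P is finitely generated and projective over R if and only if pP is finitely generated and projective over the corner ring pRp. -/
variable {R : Type*} [Ring R]

/-- The corner `pRp` of a ring `R` at an idempotent `p`, realized as the set of
elements `x` with `p * x * p = x`. -/
def Corner (p : R) : Type _ := {x : R // p * x * p = x}

namespace Corner

variable {p : R}

instance : Zero (Corner p) := ⟨⟨0, by simp⟩⟩
instance : Add (Corner p) :=
  ⟨fun x y => ⟨x.1 + y.1, by rw [mul_add, add_mul, x.2, y.2]⟩⟩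
instance : Neg (Corner p) := ⟨fun x => ⟨-x.1, by rw [mul_neg, neg_mul, x.2]⟩⟩

instance : AddCommGroup (Corner p) where
  add_assoc a b c := Subtype.ext (add_assoc _ _ _)
  zero_add a := Subtype.ext (zero_add _)
  add_zero a := Subtype.ext (add_zero _)
  add_comm a b := Subtype.ext (add_comm _ _)
  neg_add_cancel a := Subtype.ext (neg_add_cancel _)
  nsmul := nsmulRec
  zsmul := zsmulRec

/-- Multiplication in the corner ring (inherited from `R`). -/
def mul (hp : IsIdempotentElem p) (x y : Corner p) : Corner p :=
  ⟨x.1 * y.1, by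
    have hx := x.2; have hy := y.2
    conv_lhs => rw [← hx, ← hy]
    conv_rhs => rw [← hx, ← hy]
    simp only [mul_assoc, hp.eq]
    rw [← mul_assoc p p, hp.eq]⟩

/-- The corner ring `pRp` of a ring at an idempotent `p`: the unit is `p` itself. -/
def ring (hp : IsIdempotentElem p) : Ring (Corner p) where
  __ := (inferInstance : AddCommGroup (Corner p))
  mul := mul hp
  one := ⟨p, by rw [hp.eq, hp.eq]⟩
  mul_assoc a b c := Subtype.ext (mul_assoc a.1 b.1 c.1)
  one_mul a := Subtype.ext (by
    show p * a.1 = a.1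
    conv_lhs => rw [← a.2]
    rw [← mul_assoc, ← mul_assoc, hp.eq]
    exact a.2)
  mul_one a := Subtype.ext (by
    show a.1 * p = a.1
    conv_lhs => rw [← a.2]
    rw [mul_assoc, hp.eq]
    exact a.2)
  left_distrib a b c := Subtype.ext (mul_add a.1 b.1 c.1)
  right_distrib a b c := Subtype.ext (add_mul a.1 b.1 c.1)
  zero_mul a := Subtype.ext (zero_mul a.1)
  mul_zero a := Subtype.ext (mul_zero a.1)

end Corner

section Module

variable {P : Type*} [AddCommGroup P] [Module R P] {p : R}

/-- The subgroup `pP` of a left `R`-module `P`, for an idempotent `p`. -/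
def cornerModule (p : R) (P : Type*) [AddCommGroup P] [Module R P] : Type _ :=
  {x : P // p • x = x}

instance : Zero (cornerModule p P) := ⟨⟨0, by simp⟩⟩
instance : Add (cornerModule p P) :=
  ⟨fun x y => ⟨x.1 + y.1, by rw [smul_add, x.2, y.2]⟩⟩
instance : Neg (cornerModule p P) := ⟨fun x => ⟨-x.1, by rw [smul_neg, x.2]⟩⟩

instance : AddCommGroup (cornerModule p P) where
  add_assoc a b c := Subtype.ext (add_assoc _ _ _)
  zero_add a := Subtype.ext (zero_add _)
  add_zero a := Subtype.ext (add_zero _)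
  add_comm a b := Subtype.ext (add_comm _ _)
  neg_add_cancel a := Subtype.ext (neg_add_cancel _)
  nsmul := nsmulRec
  zsmul := zsmulRec

/-- The `pRp`-module structure on `pP`. -/
def cornerModuleModule (hp : IsIdempotentElem p) :
    letI := Corner.ring hp
    Module (Corner p) (cornerModule p P) :=
  letI := Corner.ring hp
  { smul := fun a x => ⟨a.1 • x.1, by
      calc p • (a.1 • x.1) = (p * a.1) • x.1 := (mul_smul _ _ _).symm
        _ = (p * a.1) • (p • x.1) := by rw [x.2]
        _ = (p * a.1 * p) • x.1 := (mul_smul _ _ _).symm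
        _ = a.1 • x.1 := by rw [a.2]⟩
    one_smul := fun x => Subtype.ext x.2
    mul_smul := fun a b x => Subtype.ext (mul_smul a.1 b.1 x.1)
    smul_zero := fun a => Subtype.ext (by show a.1 • (0 : P) = 0; simp)
    smul_add := fun a x y => Subtype.ext (smul_add a.1 x.1 y.1)
    add_smul := fun a b x => Subtype.ext (add_smul a.1 b.1 x.1)
    zero_smul := fun x => Subtype.ext (by show (0 : R) • x.1 = 0; simp) }

end Module

/-!
Fullness of `p` means `1 = ∑ⱼ aⱼ p bⱼ` for some `aⱼ, bⱼ ∈ R`. By the dual basis lemma it suffices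
to transport finite dual bases. A dual basis `(xᵢ, fᵢ)` of `P` over `R` gives the dual basis
`(p bⱼ xᵢ, p fᵢ(-) aⱼ p)` of `pP` over `pRp`, and a dual basis `(yₜ, gₜ)` of `pP` gives the dual
basis `(yₜ, ∑ⱼ aⱼ gₜ(p bⱼ -))` of `P`; in both directions the identity needed is obtained by
inserting `∑ⱼ aⱼ p bⱼ = 1`.
-/

-- Lets instance unification see that `Corner.ring` and `cornerModuleModule` extend the ambient
-- additive structures.
attribute [reducible] Corner.ring cornerModuleModule

namespace Module

theorem finite_projective_of_dualBasis {A M : Type*} [Semiring A] [AddCommMonoid M]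
    [Module A M] {ι : Type*} [Fintype ι] (x : ι → M) (f : ι → M →ₗ[A] A)
    (hf : ∀ v, ∑ i, f i v • x i = v) :
    Module.Finite A M ∧ Module.Projective A M := by
  classical
  let π : (ι → A) →ₗ[A] M := Fintype.linearCombination A x
  let s : M →ₗ[A] ι → A := LinearMap.pi f
  have hπs : π ∘ₗ s = LinearMap.id := by
    ext v
    simpa [π, s, Fintype.linearCombination_apply] using hf v
  exact ⟨.of_surjective π fun v => ⟨s v, LinearMap.congr_fun hπs v⟩, .of_split s π hπs⟩

theorem exists_dualBasis_of_finite_projective (A M : Type*) [Semiring A] [AddCommMonoid M]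
    [Module A M] [Module.Finite A M] [Module.Projective A M] :
    ∃ (n : ℕ) (x : Fin n → M) (f : Fin n → M →ₗ[A] A), ∀ v, ∑ i, f i v • x i = v := by
  obtain ⟨n, π, s, -, -, hπs⟩ := Module.Finite.exists_comp_eq_id_of_projective A M
  refine ⟨n, fun i => π (Pi.single i 1), fun i => LinearMap.proj i ∘ₗ s, fun v => ?_⟩
  have hv : π (s v) = v := LinearMap.congr_fun hπs v
  conv_rhs => rw [← hv, pi_eq_sum_univ' (s v)]
  simp

end Module

theorem exists_sum_mul_mul_eq_of_mem_closure {S : Type*} [Ring S] {e x : S}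
    (hx : x ∈ AddSubgroup.closure {y : S | ∃ r r' : S, y = r * e * r'}) :
    ∃ (k : ℕ) (a b : Fin k → S), ∑ j, a j * e * b j = x := by
  induction hx using AddSubgroup.closure_induction with
  | mem y hy =>
    obtain ⟨r, r', rfl⟩ := hy
    exact ⟨1, fun _ => r, fun _ => r', by simp⟩
  | zero => exact ⟨0, Fin.elim0, Fin.elim0, by simp⟩
  | add y z _ _ hy hz =>
    obtain ⟨k₁, a₁, b₁, rfl⟩ := hy
    obtain ⟨k₂, a₂, b₂, rfl⟩ := hz
    exact ⟨k₁ + k₂, Fin.append a₁ a₂, Fin.append b₁ b₂, by simp [Fin.sum_univ_add]⟩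
  | neg y _ hy =>
    obtain ⟨k, a, b, rfl⟩ := hy
    exact ⟨k, fun j => -a j, b, by simp⟩

namespace Corner

variable {p : R}

-- `simp` cannot rewrite `x : Corner p` inside `x.1`, whose argument must have the subtype as type.
def val (x : Corner p) : R := x.1

theorem ext {x y : Corner p} (h : x.val = y.val) : x = y := Subtype.ext h

theorem val_add (x y : Corner p) : (x + y).val = x.val + y.val := rfl

theorem val_sum {ι : Type*} (s : Finset ι) (g : ι → Corner p) :
    (∑ i ∈ s, g i).val = ∑ i ∈ s, (g i).val :=
  map_sum (AddMonoidHom.mk' val val_add) g s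

theorem val_mul (hp : IsIdempotentElem p) (x y : Corner p) :
    letI := Corner.ring hp
    (x * y).val = x.val * y.val := rfl

theorem idem_mul_val (hp : IsIdempotentElem p) (x : Corner p) : p * x.val = x.val := by
  change p * x.1 = x.1
  nth_rw 1 [← x.2]
  rw [← mul_assoc, ← mul_assoc, hp.eq, x.2]

theorem val_mul_idem (hp : IsIdempotentElem p) (x : Corner p) : x.val * p = x.val := by
  change x.1 * p = x.1
  nth_rw 1 [← x.2]
  rw [mul_assoc, hp.eq, x.2]

theorem idem_mul_val_mul (hp : IsIdempotentElem p) (x : Corner p) (t : R) :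
    p * (x.val * t) = x.val * t := by
  rw [← mul_assoc, idem_mul_val hp]

theorem val_mul_idem_mul (hp : IsIdempotentElem p) (x : Corner p) (t : R) :
    x.val * (p * t) = x.val * t := by
  rw [← mul_assoc, val_mul_idem hp]

def sandwich (hp : IsIdempotentElem p) : R →+ Corner p :=
  AddMonoidHom.mk' (fun r => ⟨p * r * p, by simp only [mul_assoc, hp.eq, ← mul_assoc p p]⟩)
    fun r s => ext (by simp only [val, mul_add, add_mul]; rfl)

theorem val_sandwich (hp : IsIdempotentElem p) (r : R) : (sandwich hp r).val = p * r * p := rfl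

end Corner

namespace cornerModule

variable {P : Type*} [AddCommGroup P] [Module R P] {p : R}

def val (m : cornerModule p P) : P := m.1

theorem ext {m m' : cornerModule p P} (h : m.val = m'.val) : m = m' := Subtype.ext h

theorem val_add (m m' : cornerModule p P) : (m + m').val = m.val + m'.val := rfl

theorem val_sum {ι : Type*} (s : Finset ι) (g : ι → cornerModule p P) :
    (∑ i ∈ s, g i).val = ∑ i ∈ s, (g i).val :=
  map_sum (AddMonoidHom.mk' val val_add) g s

theorem val_smul (hp : IsIdempotentElem p) (c : Corner p) (m : cornerModule p P) :
    letI := Corner.ring hp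
    letI := cornerModuleModule (P := P) hp
    (c • m).val = c.val • m.val := rfl

def proj (hp : IsIdempotentElem p) : P →+ cornerModule p P :=
  AddMonoidHom.mk' (fun v => ⟨p • v, by rw [← mul_smul, hp.eq]⟩)
    fun v w => ext (smul_add p v w)

theorem val_proj (hp : IsIdempotentElem p) (v : P) : (proj hp v).val = p • v := rfl

theorem proj_val (hp : IsIdempotentElem p) (m : cornerModule p P) : proj hp m.val = m :=
  Subtype.ext m.2

theorem proj_smul_eq_sum (hp : IsIdempotentElem p) {k : ℕ} {a b : Fin k → R}
    (hab : ∑ j, a j * p * b j = 1) (r : R) (v : P) :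
    letI := Corner.ring hp
    letI := cornerModuleModule (P := P) hp
    proj hp (r • v) = ∑ j, Corner.sandwich hp (r * a j) • proj hp (b j • v) := by
  have hterm : ∀ j, p * (r * a j) * p * (p * b j) = p * r * (a j * p * b j) := fun j => by
    rw [← mul_assoc, mul_assoc _ p p, hp.eq]
    simp only [mul_assoc]
  apply ext
  simp only [val_sum, val_smul, val_proj, Corner.val_sandwich, ← mul_smul, hterm]
  rw [← Finset.sum_smul, ← Finset.mul_sum, hab, mul_one]

end cornerModule

section Functionals

variable {P : Type*} [AddCommGroup P] [Module R P] {p : R}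

open cornerModule

def sandwichFunctional (hp : IsIdempotentElem p) (f : P →ₗ[R] R) (r : R) :
    letI := Corner.ring hp
    letI := cornerModuleModule (P := P) hp
    cornerModule p P →ₗ[Corner p] Corner p :=
  letI := Corner.ring hp
  letI := cornerModuleModule (P := P) hp
  { toFun := fun m => Corner.sandwich hp (f m.val * r)
    map_add' := fun m m' => by
      rw [val_add, map_add, add_mul, map_add]
    map_smul' := fun c m => Corner.ext <| by
      simp only [RingHom.id_apply, smul_eq_mul, Corner.val_mul, Corner.val_sandwich, val_smul,
        map_smul, mul_assoc, Corner.idem_mul_val_mul hp, Corner.val_mul_idem_mul hp] }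

theorem sandwichFunctional_apply (hp : IsIdempotentElem p) (f : P →ₗ[R] R) (r : R)
    (m : cornerModule p P) :
    sandwichFunctional hp f r m = Corner.sandwich hp (f m.val * r) := rfl

def extendFunctional (hp : IsIdempotentElem p) {k : ℕ} {a b : Fin k → R}
    (hab : ∑ j, a j * p * b j = 1)
    (g : letI := Corner.ring hp
      letI := cornerModuleModule (P := P) hp
      cornerModule p P →ₗ[Corner p] Corner p) :
    P →ₗ[R] R :=
  letI := Corner.ring hp
  letI := cornerModuleModule (P := P) hp
  { toFun := fun v => ∑ j, a j * (g (proj hp (b j • v))).val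
    map_add' := fun v w => by
      simp only [smul_add, map_add, g.map_add, Corner.val_add, mul_add, Finset.sum_add_distrib]
    map_smul' := fun r v => by
      have hexpand : ∀ j, g (proj hp (b j • r • v))
          = ∑ i, Corner.sandwich hp (b j * r * a i) • g (proj hp (b i • v)) := fun j => by
        rw [smul_smul, proj_smul_eq_sum hp hab, map_sum]
        simp only [map_smul]
      rw [RingHom.id_apply, smul_eq_mul]
      simp only [hexpand, smul_eq_mul, Corner.val_sum, Corner.val_mul, Corner.val_sandwich,
        Finset.mul_sum]
      rw [Finset.sum_comm]
      refine Finset.sum_congr rfl fun i _ => ?_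
      set y := (g (proj hp (b i • v))).val
      calc ∑ j, a j * (p * (b j * r * a i) * p * y) = ∑ j, a j * p * b j * (r * (a i * y)) :=
            Finset.sum_congr rfl fun j _ => by
              simp only [y, mul_assoc, Corner.idem_mul_val hp]
        _ = r * (a i * y) := by rw [← Finset.sum_mul, hab, one_mul] }

theorem extendFunctional_apply (hp : IsIdempotentElem p) {k : ℕ} {a b : Fin k → R}
    (hab : ∑ j, a j * p * b j = 1)
    (g : letI := Corner.ring hp
      letI := cornerModuleModule (P := P) hp
      cornerModule p P →ₗ[Corner p] Corner p) (v : P) :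
    extendFunctional hp hab g v = ∑ j, a j * (g (proj hp (b j • v))).val := rfl

end Functionals

section Transfer

variable {P : Type*} [AddCommGroup P] [Module R P] {p : R}

open cornerModule

theorem cornerModule.finite_projective_of_finite_projective (hp : IsIdempotentElem p)
    {k : ℕ} {a b : Fin k → R} (hab : ∑ j, a j * p * b j = 1)
    [Module.Finite R P] [Module.Projective R P] :
    letI := Corner.ring hp
    letI := cornerModuleModule (P := P) hp
    Module.Finite (Corner p) (cornerModule p P) ∧
      Module.Projective (Corner p) (cornerModule p P) := by
  let _ := Corner.ring hp
  let _ := cornerModuleModule (P := P) hp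
  obtain ⟨n, x, f, hf⟩ := Module.exists_dualBasis_of_finite_projective R P
  refine Module.finite_projective_of_dualBasis (fun q : Fin n × Fin k => proj hp (b q.2 • x q.1))
    (fun q => sandwichFunctional hp (f q.1) (a q.2)) fun m => ?_
  simp only [Fintype.sum_prod_type, sandwichFunctional_apply, ← proj_smul_eq_sum hp hab]
  rw [← map_sum, hf, proj_val]

theorem finite_projective_of_cornerModule_finite_projective (hp : IsIdempotentElem p)
    {k : ℕ} {a b : Fin k → R} (hab : ∑ j, a j * p * b j = 1) :
    letI := Corner.ring hp
    letI := cornerModuleModule (P := P) hp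
    Module.Finite (Corner p) (cornerModule p P) → Module.Projective (Corner p) (cornerModule p P) →
      Module.Finite R P ∧ Module.Projective R P := by
  let _ := Corner.ring hp
  let _ := cornerModuleModule (P := P) hp
  intro _ _
  obtain ⟨n, y, g, hg⟩ := Module.exists_dualBasis_of_finite_projective (Corner p) (cornerModule p P)
  refine Module.finite_projective_of_dualBasis (fun t => (y t).val)
    (fun t => extendFunctional hp hab (g t)) fun v => ?_
  calc ∑ t, extendFunctional hp hab (g t) v • (y t).val
      = ∑ j, a j • (∑ t, g t (proj hp (b j • v)) • y t).val := by
        simp only [extendFunctional_apply, Finset.sum_smul, mul_smul, val_sum, val_smul,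
          Finset.smul_sum]
        exact Finset.sum_comm
    _ = ∑ j, (a j * p * b j) • v := by simp only [hg, val_proj, mul_smul]
    _ = v := by rw [← Finset.sum_smul, hab, one_smul]

end Transfer

/-- Let `R` be a ring and `p ∈ R` a full idempotent (the additive group
generated by `{r * p * r'}` is all of `R`).  Then a left `R`-module `P` is finitely
generated projective over `R` if and only if `pP` is finitely generated projective over
the corner ring `pRp`. -/
theorem stmt_6 {R : Type*} [Ring R] {p : R} (hp : IsIdempotentElem p)
    (hfull : AddSubgroup.closure {x : R | ∃ r r' : R, x = r * p * r'} = ⊤)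
    (P : Type*) [AddCommGroup P] [Module R P] :
    letI := Corner.ring hp
    letI := cornerModuleModule (P := P) hp
    ((Module.Finite R P ∧ Module.Projective R P) ↔
      (Module.Finite (Corner p) (cornerModule p P) ∧
        Module.Projective (Corner p) (cornerModule p P))) := by
  obtain ⟨k, a, b, hab⟩ := exists_sum_mul_mul_eq_of_mem_closure (hfull ▸ AddSubgroup.mem_top 1)
  constructor
  · rintro ⟨_, _⟩
    exact cornerModule.finite_projective_of_finite_projective hp hab
  · rintro ⟨hfin, hproj⟩
    exact finite_projective_of_cornerModule_finite_projective hp hab hfin hproj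
end

section
/- Let (X,μ) be a probability space and A ∈ M(m×m, L^∞(X,ℤ)) a matrix over the ring of bounded measurable integer-valued functions. Suppose AA* is diagonalized (by a unitary over L^∞(X)) with nonnegative diagonal entries f₁,…,f_m ∈ L^∞(X). Then for almost every x, the product ∏_{i: f_i(x)>0} f_i(x) equals the product of the positive eigenvalues of the integer matrix A(x)A(x)*, which is an integer ≥ 1; hence ∫_X ln(∏_{i: f_i(x)>0} f_i(x)) dμ(x) ≥ 0. -/
/-!
By the spectral theorem the characteristic polynomial of the real symmetric matrix `M = A Aᵀ` is
`∏ j (X - λⱼ) = X ^ z · ∏_{λⱼ ≠ 0} (X - λⱼ)`, where `z` is the number of zero eigenvalues, so its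
coefficient of `X ^ z` is `± ∏_{λⱼ ≠ 0} λⱼ`. As `M` has integer entries, so has its characteristic
polynomial; since `M` is positive semidefinite, the nonzero eigenvalues are the positive ones and
their product is a positive integer, hence `≥ 1`, with nonnegative logarithm.
-/

open MeasureTheory Finset Matrix Polynomial
open scoped Classical

theorem Polynomial.coeff_prod_X_sub_C_card_eq_zero {R ι : Type*} [CommRing R] [Fintype ι]
    (d : ι → R) :
    (∏ j, (X - C (d j))).coeff (univ.filter fun j => d j = 0).card
      = ∏ j ∈ univ.filter (fun j => d j ≠ 0), -d j := by
  have hzeros : ∏ j ∈ univ.filter (fun j => d j = 0), (X - C (d j))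
      = X ^ (univ.filter fun j => d j = 0).card := by
    rw [prod_congr rfl fun j hj => by rw [(mem_filter.mp hj).2, map_zero, sub_zero],
      prod_const]
  rw [← prod_filter_not_mul_prod_filter univ (fun j => d j = 0), hzeros, coeff_mul_X_pow',
    if_pos le_rfl, Nat.sub_self, coeff_zero_eq_eval_zero, eval_prod]
  simp only [eval_sub, eval_X, eval_C, zero_sub]

theorem Matrix.IsHermitian.prod_eigenvalues_ne_zero_eq_intCast {n : Type*} [Fintype n]
    [DecidableEq n] {M : Matrix n n ℤ} (hM : (M.map (Int.cast : ℤ → ℝ)).IsHermitian) :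
    ∏ j ∈ univ.filter (fun j => hM.eigenvalues j ≠ 0), hM.eigenvalues j
      = (((-1) ^ (univ.filter fun j => hM.eigenvalues j ≠ 0).card
          * M.charpoly.coeff (univ.filter fun j => hM.eigenvalues j = 0).card : ℤ) : ℝ) := by
  have hchar : (M.map (Int.castRingHom ℝ)).charpoly = ∏ j, (X - C (hM.eigenvalues j)) :=
    hM.charpoly_eq
  have hcoeff := coeff_prod_X_sub_C_card_eq_zero hM.eigenvalues
  rw [← hchar, charpoly_map, coeff_map, eq_intCast, prod_neg] at hcoeff
  push_cast
  rw [hcoeff, ← mul_assoc, ← mul_pow]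
  simp

theorem Matrix.PosSemidef.exists_int_prod_pos_eigenvalues {n : Type*} [Fintype n]
    [DecidableEq n] {M : Matrix n n ℤ} (hM : (M.map (Int.cast : ℤ → ℝ)).IsHermitian)
    (hPSD : (M.map (Int.cast : ℤ → ℝ)).PosSemidef) :
    ∃ k : ℤ, 1 ≤ k ∧ ∏ j ∈ univ.filter (fun j => 0 < hM.eigenvalues j), hM.eigenvalues j = k := by
  have hpos_iff : ∀ j, 0 < hM.eigenvalues j ↔ hM.eigenvalues j ≠ 0 := fun j =>
    (hPSD.eigenvalues_nonneg j).lt_iff_ne'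
  simp only [hpos_iff, hM.prod_eigenvalues_ne_zero_eq_intCast]
  refine ⟨_, ?_, rfl⟩
  have hprod_pos : (0 : ℝ) < ∏ j ∈ univ.filter (fun j => hM.eigenvalues j ≠ 0), hM.eigenvalues j :=
    prod_pos fun j hj => (hpos_iff j).mpr (mem_filter.mp hj).2
  rw [hM.prod_eigenvalues_ne_zero_eq_intCast] at hprod_pos
  exact_mod_cast hprod_pos

theorem Matrix.posSemidef_map_intCast_mul_transpose {m n : Type*} [Fintype m] [Fintype n]
    (A : Matrix m n ℤ) : ((A * Aᵀ).map (Int.cast : ℤ → ℝ)).PosSemidef := by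
  change ((A * Aᵀ).map (Int.castRingHom ℝ)).PosSemidef
  rw [Matrix.map_mul, transpose_map, ← conjTranspose_eq_transpose_of_trivial]
  exact posSemidef_self_mul_conjTranspose _

theorem Equiv.prod_filter_comp {ι κ M : Type*} [Fintype ι] [Fintype κ] [CommMonoid M]
    (e : ι ≃ κ) (p : κ → Prop) (g : κ → M) :
    ∏ i ∈ univ.filter (fun i => p (e i)), g (e i) = ∏ j ∈ univ.filter p, g j := by
  simp only [prod_filter]
  exact e.prod_comp fun j => if p j then g j else 1

theorem stmt_15_general {X : Type*} [MeasurableSpace X] (μ : Measure X)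
    {m : ℕ} (A : X → Matrix (Fin m) (Fin m) ℤ)
    (hH : ∀ x, ((A x * (A x)ᵀ).map (Int.cast : ℤ → ℝ)).IsHermitian)
    (f : Fin m → X → ℝ)
    (heig : ∀ᵐ x ∂μ, ∃ σ : Equiv.Perm (Fin m), ∀ i, f i x = (hH x).eigenvalues (σ i)) :
    (∀ᵐ x ∂μ, ∃ k : ℤ, 1 ≤ k ∧
      (∏ i ∈ Finset.univ.filter fun i => 0 < f i x, f i x) = (k : ℝ)) ∧
    0 ≤ ∫ x, Real.log (∏ i ∈ Finset.univ.filter fun i => 0 < f i x, f i x) ∂μ := by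
  have hAE : ∀ᵐ x ∂μ, ∃ k : ℤ, 1 ≤ k ∧
      (∏ i ∈ Finset.univ.filter fun i => 0 < f i x, f i x) = (k : ℝ) := by
    filter_upwards [heig] with x ⟨σ, hσ⟩
    simp only [hσ]
    rw [σ.prod_filter_comp (fun j => 0 < (hH x).eigenvalues j)]
    exact (posSemidef_map_intCast_mul_transpose (A x)).exists_int_prod_pos_eigenvalues (hH x)
  refine ⟨hAE, integral_nonneg_of_ae ?_⟩
  filter_upwards [hAE] with x ⟨k, hk1, hk⟩
  exact Real.log_nonneg (hk ▸ by exact_mod_cast hk1)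

/-- Let `(X,μ)` be a probability space and `A` a measurable family of
`m × m` integer matrices (a matrix over `L^∞(X,ℤ)`).  Suppose `AA*` is diagonalized over
`L^∞(X)` with nonnegative diagonal entries `f₁, …, f_m`, i.e. for a.e. `x` the numbers
`f i x` are (up to permutation) the eigenvalues of `A(x)A(x)*`.  Then for a.e. `x` the
product `∏_{i : f i x > 0} f i x` is an integer `≥ 1`, and hence
`∫ ln (∏_{i : f i x > 0} f i x) dμ ≥ 0`. -/
theorem stmt_15 {X : Type*} [MeasurableSpace X] (μ : Measure X) [IsProbabilityMeasure μ]
    {m : ℕ} (A : X → Matrix (Fin m) (Fin m) ℤ)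
    (hH : ∀ x, ((A x * (A x)ᵀ).map (Int.cast : ℤ → ℝ)).IsHermitian)
    (f : Fin m → X → ℝ)
    (hfmeas : ∀ i, Measurable (f i))
    (hf0 : ∀ i, ∀ᵐ x ∂μ, 0 ≤ f i x)
    (heig : ∀ᵐ x ∂μ, ∃ σ : Equiv.Perm (Fin m), ∀ i, f i x = (hH x).eigenvalues (σ i)) :
    (∀ᵐ x ∂μ, ∃ k : ℤ, 1 ≤ k ∧
      (∏ i ∈ Finset.univ.filter fun i => 0 < f i x, f i x) = (k : ℝ)) ∧
    0 ≤ ∫ x, Real.log (∏ i ∈ Finset.univ.filter fun i => 0 < f i x, f i x) ∂μ :=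
  stmt_15_general μ A hH f heig
end

section
/- Let F : ℝ → [0,∞) be monotone nondecreasing and right-continuous with F(λ) constant for λ ≥ K, and suppose ∫_{0⁺}^∞ ln λ dF(λ) > −∞. If F_i is a net of such functions with the same bound K, F_i(λ) → F(λ) at continuity points (e.g., induced by convergence of all moments tr(Δ_i^m) → tr(Δ^m) of uniformly norm-bounded positive operators), and exp(∫_{0⁺}^∞ ln λ dF_i(λ)) ≥ 1 for all i, then F_i(0) → F(0) and exp(∫_{0⁺}^∞ ln λ dF(λ)) ≥ 1. -/
/-!
The determinant condition says `∫_{(0,b]} log dFᵢ ≥ 0` for any `b > K`. Splitting at `ε < 1`,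
`log ε · (Fᵢ ε - Fᵢ 0) ≥ ∫_{(0,ε]} log dFᵢ ≥ -log b · (Fᵢ b - Fᵢ ε)`, so the mass of `dFᵢ` on
`(0, ε]` is `O(1 / |log ε|)` uniformly in `i`: no mass escapes into the atom at `0`, and
`Fᵢ 0 → F 0`.

For the second claim, dropping `(0, ε]` only increases the integral, so `∫_{(ε,b]} log dFᵢ ≥ 0`.
When `ε` and `b` are continuity points of `F`, bounding `log` on `(ε, b]` from above and below by
step functions with jumps at continuity points shows `limsup ∫_{(ε,b]} log dFᵢ ≤ ∫_{(ε,b]} log dF`,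
hence `∫_{(ε,b]} log dF ≥ 0`; letting `ε → 0` along continuity points gives `∫_{(0,b]} log dF ≥ 0`.
-/

open MeasureTheory Filter Set Topology Real

section SetIntegral

variable {μ : Measure ℝ} {f : ℝ → ℝ} {a b m : ℝ}

lemma setIntegral_Ioc_add_setIntegral_Ioc (ham : a ≤ m) (hmb : m ≤ b)
    (hf : IntegrableOn f (Ioc a b) μ) :
    ∫ x in Ioc a m, f x ∂μ + ∫ x in Ioc m b, f x ∂μ = ∫ x in Ioc a b, f x ∂μ := by
  rw [← Ioc_union_Ioc_eq_Ioc ham hmb, setIntegral_union (Ioc_disjoint_Ioc_of_le le_rfl)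
    measurableSet_Ioc (hf.mono_set (Ioc_subset_Ioc_right hmb))
    (hf.mono_set (Ioc_subset_Ioc_left ham))]

lemma setIntegral_Ioi_eq_setIntegral_Ioc (hb : μ (Ioi b) = 0) :
    ∫ x in Ioi a, f x ∂μ = ∫ x in Ioc a b, f x ∂μ := by
  refine setIntegral_congr_set (ae_eq_set.2 ⟨measure_mono_null ?_ hb, ?_⟩)
  · intro x hx
    exact lt_of_not_ge fun hxb => hx.2 ⟨hx.1, hxb⟩
  · rw [sdiff_eq_empty.2 Ioc_subset_Ioi_self, measure_empty]

lemma tendsto_setIntegral_Ioc_nhdsGT (hf : IntegrableOn f (Ioc a b) μ) :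
    Tendsto (fun ε => ∫ x in Ioc ε b, f x ∂μ) (𝓝[>] a) (𝓝 (∫ x in Ioc a b, f x ∂μ)) := by
  have hind : ∀ᶠ ε in 𝓝[>] a,
      ∫ x in Ioc a b, (Ioi ε).indicator f x ∂μ = ∫ x in Ioc ε b, f x ∂μ := by
    filter_upwards [self_mem_nhdsWithin] with ε hε
    rw [setIntegral_indicator measurableSet_Ioi, Ioc_inter_Ioi, max_eq_right (le_of_lt hε)]
  refine Tendsto.congr' hind (tendsto_integral_filter_of_dominated_convergence (fun x => |f x|)
    ?_ ?_ hf.abs ?_)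
  · exact Eventually.of_forall fun ε => hf.aestronglyMeasurable.indicator measurableSet_Ioi
  · exact Eventually.of_forall fun ε => ae_of_all _ fun x => norm_indicator_le_norm_self _ _
  · refine (ae_restrict_mem measurableSet_Ioc).mono fun x hx => tendsto_const_nhds.congr' ?_
    filter_upwards [Ioo_mem_nhdsGT hx.1] with ε hε
    exact (indicator_of_mem hε.2 f).symm

lemma integrableOn_log_Ioc [IsLocallyFiniteMeasure μ] (ha : 0 < a) :
    IntegrableOn log (Ioc a b) μ :=
  ((continuousOn_log.mono fun _ hx => (ha.trans_le hx.1).ne').integrableOn_Icc).mono_set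
    Ioc_subset_Icc_self

lemma setIntegral_log_Ioc_zero_le_of_le_one (hf : IntegrableOn log (Ioc 0 b) μ)
    (hm : 0 ≤ m) (hm1 : m ≤ 1) (hmb : m ≤ b) :
    ∫ x in Ioc 0 b, log x ∂μ ≤ ∫ x in Ioc m b, log x ∂μ := by
  rw [← setIntegral_Ioc_add_setIntegral_Ioc hm hmb hf, add_le_iff_nonpos_left]
  exact setIntegral_nonpos measurableSet_Ioc fun x hx => log_nonpos hx.1.le (hx.2.trans hm1)

end SetIntegral

namespace StieltjesFunction

variable (G : StieltjesFunction ℝ) {f : ℝ → ℝ} {a b c : ℝ}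

lemma exists_continuousAt_mem_Ioo (hab : a < b) : ∃ x ∈ Ioo a b, ContinuousAt G x := by
  obtain ⟨x, hx, hxab⟩ := (G.mono.countable_not_continuousAt.dense_compl ℝ).exists_mem_open
    isOpen_Ioo (nonempty_Ioo.2 hab)
  exact ⟨x, hxab, not_not.1 hx⟩

lemma frequently_continuousAt_nhdsGT : ∃ᶠ x in 𝓝[>] a, ContinuousAt G x := by
  refine frequently_iff.2 fun hs => ?_
  obtain ⟨c, hac, hc⟩ := mem_nhdsGT_iff_exists_Ioo_subset.1 hs
  obtain ⟨x, hx, hGx⟩ := G.exists_continuousAt_mem_Ioo hac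
  exact ⟨x, hc hx, hGx⟩

lemma measure_Ioi_eq_zero_of_forall_ge_eq (hG : ∀ x ≥ a, G x = G a) : G.measure (Ioi a) = 0 := by
  have hlim : Tendsto G atTop (𝓝 (G a)) :=
    tendsto_const_nhds.congr' (eventually_ge_atTop a |>.mono fun x hx => (hG x hx).symm)
  rw [G.measure_Ioi hlim, sub_self, ENNReal.ofReal_zero]

lemma continuousAt_of_forall_ge_eq (hG : ∀ x ≥ a, G x = G a) (hab : a < b) : ContinuousAt G b :=
  continuousAt_const.congr <| (eventually_gt_nhds hab).mono fun x hx => (hG x hx.le).symm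

lemma measureReal_Ioc (hab : a ≤ b) : G.measure.real (Ioc a b) = G b - G a := by
  rw [measureReal_def, G.measure_Ioc, ENNReal.toReal_ofReal (sub_nonneg.2 (G.mono hab))]

lemma setIntegral_Ioc_le_mul (hab : a ≤ b) (hf : IntegrableOn f (Ioc a b) G.measure)
    (hfc : ∀ x ∈ Ioc a b, f x ≤ c) : ∫ x in Ioc a b, f x ∂G.measure ≤ c * (G b - G a) := by
  calc ∫ x in Ioc a b, f x ∂G.measure ≤ ∫ _ in Ioc a b, c ∂G.measure :=
        setIntegral_mono_on hf (integrableOn_const (by simp [G.measure_Ioc])) measurableSet_Ioc hfc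
    _ = c * (G b - G a) := by rw [setIntegral_const, G.measureReal_Ioc hab, smul_eq_mul, mul_comm]

lemma mul_le_setIntegral_Ioc (hab : a ≤ b) (hf : IntegrableOn f (Ioc a b) G.measure)
    (hfc : ∀ x ∈ Ioc a b, c ≤ f x) : c * (G b - G a) ≤ ∫ x in Ioc a b, f x ∂G.measure := by
  calc c * (G b - G a) = ∫ _ in Ioc a b, c ∂G.measure := by
        rw [setIntegral_const, G.measureReal_Ioc hab, smul_eq_mul, mul_comm]
    _ ≤ ∫ x in Ioc a b, f x ∂G.measure :=
        setIntegral_mono_on (integrableOn_const (by simp [G.measure_Ioc])) hf measurableSet_Ioc hfc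

lemma sub_mul_neg_log_le {ε : ℝ}
    (hG : IntegrableOn log (Ioc 0 b) G.measure) (hdet : 0 ≤ ∫ x in Ioc 0 b, log x ∂G.measure)
    (hε : 0 < ε) (hεb : ε ≤ b) :
    (G ε - G 0) * -log ε ≤ log b * (G b - G ε) := by
  rw [← setIntegral_Ioc_add_setIntegral_Ioc hε.le hεb hG] at hdet
  have h₁ := G.setIntegral_Ioc_le_mul hε.le (hG.mono_set (Ioc_subset_Ioc_right hεb))
    fun x hx => log_le_log hx.1 hx.2
  have h₂ := G.setIntegral_Ioc_le_mul hεb (integrableOn_log_Ioc hε)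
    fun x hx => log_le_log (hε.trans hx.1) hx.2
  linarith

end StieltjesFunction

section WeakConvergence

variable {ι : Type*} {l : Filter ι} {F : StieltjesFunction ℝ} {G : ι → StieltjesFunction ℝ}
  {a b r η : ℝ}

lemma eventually_setIntegral_log_Ioc_le_of_le_mul
    (hconv : ∀ x, ContinuousAt F x → Tendsto (fun i => G i x) l (𝓝 (F x)))
    (ha : 0 < a) (hab : a ≤ b) (hFa : ContinuousAt F a) (hFb : ContinuousAt F b)
    (hbr : b ≤ a * r) (hη : 0 < η) :
    ∀ᶠ i in l, ∫ x in Ioc a b, log x ∂(G i).measure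
      ≤ ∫ x in Ioc a b, log x ∂F.measure + log r * (F b - F a) + η := by
  have hr : 0 < r := pos_of_mul_pos_right (ha.trans_le (hab.trans hbr)) ha.le
  have hlog : log b ≤ log a + log r := by
    rw [← log_mul ha.ne' hr.ne']
    exact log_le_log (ha.trans_le hab) hbr
  have hlim : Tendsto (fun i => log b * (G i b - G i a)) l (𝓝 (log b * (F b - F a))) :=
    ((hconv b hFb).sub (hconv a hFa)).const_mul _
  filter_upwards [hlim.eventually_lt_const (lt_add_of_pos_right _ hη)] with i hi
  calc ∫ x in Ioc a b, log x ∂(G i).measure ≤ log b * (G i b - G i a) :=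
        (G i).setIntegral_Ioc_le_mul hab (integrableOn_log_Ioc ha)
          fun x hx => log_le_log (ha.trans hx.1) hx.2
    _ ≤ (log a + log r) * (F b - F a) + η := by
        linarith [mul_le_mul_of_nonneg_right hlog (sub_nonneg.2 (F.mono hab))]
    _ ≤ ∫ x in Ioc a b, log x ∂F.measure + log r * (F b - F a) + η := by
        have := F.mul_le_setIntegral_Ioc hab (integrableOn_log_Ioc ha)
          fun x hx => log_le_log ha hx.1.le
        linarith

lemma eventually_setIntegral_log_Ioc_le_of_lt_mul_pow
    (hconv : ∀ x, ContinuousAt F x → Tendsto (fun i => G i x) l (𝓝 (F x)))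
    (hr : 1 < r) (n : ℕ) (ha : 0 < a) (hab : a ≤ b) (hFa : ContinuousAt F a)
    (hFb : ContinuousAt F b) (hbr : b < a * r ^ (n + 1)) (hη : 0 < η) :
    ∀ᶠ i in l, ∫ x in Ioc a b, log x ∂(G i).measure
      ≤ ∫ x in Ioc a b, log x ∂F.measure + log r * (F b - F a) + η := by
  induction n generalizing a b η with
  | zero =>
    exact eventually_setIntegral_log_Ioc_le_of_le_mul hconv ha hab hFa hFb
      (by simpa using hbr.le) hη
  | succ n ih =>
    by_cases hb : b < a * r ^ (n + 1)
    · exact ih ha hab hFa hFb hb hη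
    have hr0 : 0 < r := zero_lt_one.trans hr
    have hbr' : b / r < a * r ^ (n + 1) := by
      rw [div_lt_iff₀ hr0, mul_assoc, ← pow_succ]
      exact hbr
    obtain ⟨m, ⟨hbm, hma⟩, hFm⟩ := F.exists_continuousAt_mem_Ioo hbr'
    have ham : a ≤ m := by
      refine le_trans ?_ hbm.le
      rw [le_div_iff₀ hr0]
      calc a * r ≤ a * r ^ (n + 1) :=
            mul_le_mul_of_nonneg_left (le_self_pow₀ hr.le n.succ_ne_zero) ha.le
        _ ≤ b := not_lt.1 hb
    have hmb : m ≤ b := hma.le.trans (not_lt.1 hb)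
    have hbm' : b ≤ m * r := ((div_lt_iff₀ hr0).1 hbm).le
    filter_upwards [ih ha ham hFa hFm hma (half_pos hη), eventually_setIntegral_log_Ioc_le_of_le_mul
      hconv (ha.trans_le ham) hmb hFm hFb hbm' (half_pos hη)] with i h₁ h₂
    rw [← setIntegral_Ioc_add_setIntegral_Ioc ham hmb (integrableOn_log_Ioc ha),
      ← setIntegral_Ioc_add_setIntegral_Ioc ham hmb (integrableOn_log_Ioc ha)]
    linarith

lemma eventually_setIntegral_log_Ioc_le
    (hconv : ∀ x, ContinuousAt F x → Tendsto (fun i => G i x) l (𝓝 (F x)))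
    (ha : 0 < a) (hab : a ≤ b) (hFa : ContinuousAt F a) (hFb : ContinuousAt F b) (hη : 0 < η) :
    ∀ᶠ i in l, ∫ x in Ioc a b, log x ∂(G i).measure ≤ ∫ x in Ioc a b, log x ∂F.measure + η := by
  set D := F b - F a
  have hD : 0 ≤ D := sub_nonneg.2 (F.mono hab)
  set r := exp (η / (2 * (D + 1)))
  have hr : 1 < r := one_lt_exp_iff.2 (by positivity)
  have hrD : log r * D ≤ η / 2 := by
    rw [log_exp, div_mul_eq_mul_div, div_le_div_iff₀ (by positivity) two_pos]
    nlinarith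
  obtain ⟨n, hn⟩ := pow_unbounded_of_one_lt (b / a) hr
  have hbr : b < a * r ^ (n + 1) := by
    rw [← div_lt_iff₀' ha]
    exact hn.trans_le (pow_le_pow_right₀ hr.le n.le_succ)
  filter_upwards [eventually_setIntegral_log_Ioc_le_of_lt_mul_pow hconv hr n ha hab hFa hFb hbr
    (half_pos hη)] with i hi
  linarith

lemma tendsto_apply_of_forall_eventually_sub_le
    (hconv : ∀ x, ContinuousAt F x → Tendsto (fun i => G i x) l (𝓝 (F x))) (x : ℝ)
    (hmass : ∀ θ > 0, ∀ᶠ ε in 𝓝[>] x, ContinuousAt F ε → ∀ᶠ i in l, G i ε - G i x ≤ θ) :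
    Tendsto (fun i => G i x) l (𝓝 (F x)) := by
  refine Metric.tendsto_nhds.2 fun θ hθ => ?_
  have hθ3 : 0 < θ / 3 := by positivity
  have hright : ∀ᶠ ε in 𝓝[>] x, F ε < F x + θ / 3 :=
    ((F.right_continuous x).mono Ioi_subset_Ici_self).eventually_lt_const
      (lt_add_of_pos_right _ hθ3)
  obtain ⟨ε, hFε, hmassε, hFεx⟩ :=
    (F.frequently_continuousAt_nhdsGT.and_eventually
      ((hmass _ hθ3).and (hright.and self_mem_nhdsWithin))).exists
  filter_upwards [hmassε hFε, Metric.tendsto_nhds.1 (hconv ε hFε) _ hθ3] with i hi hiε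
  rw [Real.dist_eq, abs_lt] at hiε ⊢
  have hGi := (G i).mono hFεx.2.le
  have hF := F.mono hFεx.2.le
  constructor <;> linarith [hFεx.1]

lemma tendsto_apply_zero_of_setIntegral_log_nonneg
    (hconv : ∀ x, ContinuousAt F x → Tendsto (fun i => G i x) l (𝓝 (F x)))
    (hb : 1 ≤ b) (hFb : ContinuousAt F b) (hG : ∀ i, IntegrableOn log (Ioc 0 b) (G i).measure)
    (hdet : ∀ i, 0 ≤ ∫ x in Ioc 0 b, log x ∂(G i).measure) :
    Tendsto (fun i => G i 0) l (𝓝 (F 0)) := by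
  refine tendsto_apply_of_forall_eventually_sub_le hconv 0 fun θ hθ => ?_
  set C := log b * (F b - F 0 + 1)
  have hC : 0 ≤ C := mul_nonneg (log_nonneg hb) (by linarith [F.mono (zero_le_one.trans hb)])
  filter_upwards [Ioo_mem_nhdsGT (lt_min (zero_lt_one.trans_le hb) (exp_pos (-(C / θ))))]
    with ε ⟨hε, hεb⟩ hFε
  have hlogε : C / θ < -log ε := by
    rw [lt_neg, ← log_exp (-(C / θ))]
    exact log_lt_log hε (hεb.trans_le (min_le_right _ _))
  have hCθ : C < θ * -log ε := (div_lt_iff₀' hθ).1 hlogε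
  filter_upwards [((hconv b hFb).sub (hconv ε hFε)).eventually_lt_const (lt_add_one _)] with i hi
  have hmass : (G i ε - G i 0) * -log ε ≤ C :=
    ((G i).sub_mul_neg_log_le (hG i) (hdet i) hε ((hεb.trans_le (min_le_left _ _)).le)).trans
      (mul_le_mul_of_nonneg_left (by linarith [F.mono hε.le]) (log_nonneg hb))
  exact (lt_of_mul_lt_mul_right (hmass.trans_lt hCθ) (by linarith [div_nonneg hC hθ.le])).le

lemma setIntegral_log_Ioc_nonneg_of_eventually [l.NeBot]
    (hconv : ∀ x, ContinuousAt F x → Tendsto (fun i => G i x) l (𝓝 (F x)))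
    (ha : 0 < a) (hab : a ≤ b) (hFa : ContinuousAt F a) (hFb : ContinuousAt F b)
    (hdet : ∀ᶠ i in l, 0 ≤ ∫ x in Ioc a b, log x ∂(G i).measure) :
    0 ≤ ∫ x in Ioc a b, log x ∂F.measure := by
  refine le_of_forall_pos_le_add fun η hη => ?_
  obtain ⟨i, hi, hiη⟩ :=
    (hdet.and (eventually_setIntegral_log_Ioc_le hconv ha hab hFa hFb hη)).exists
  linarith

lemma setIntegral_log_Ioc_zero_nonneg [l.NeBot]
    (hconv : ∀ x, ContinuousAt F x → Tendsto (fun i => G i x) l (𝓝 (F x)))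
    (hb : 1 ≤ b) (hFb : ContinuousAt F b) (hF : IntegrableOn log (Ioc 0 b) F.measure)
    (hG : ∀ i, IntegrableOn log (Ioc 0 b) (G i).measure)
    (hdet : ∀ i, 0 ≤ ∫ x in Ioc 0 b, log x ∂(G i).measure) :
    0 ≤ ∫ x in Ioc 0 b, log x ∂F.measure := by
  refine ge_of_tendsto_of_frequently (tendsto_setIntegral_Ioc_nhdsGT hF) ?_
  refine (F.frequently_continuousAt_nhdsGT.and_eventually (Ioo_mem_nhdsGT one_pos)).mono ?_
  rintro ε ⟨hFε, hε, hε1⟩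
  exact setIntegral_log_Ioc_nonneg_of_eventually hconv hε (hε1.le.trans hb) hFε hFb
    (Eventually.of_forall fun i => (hdet i).trans
      (setIntegral_log_Ioc_zero_le_of_le_one (hG i) hε.le hε1.le (hε1.le.trans hb)))

end WeakConvergence

theorem stmt_18_general {ι : Type*} (l : Filter ι) [l.NeBot]
    (F : StieltjesFunction ℝ) (Fi : ι → StieltjesFunction ℝ)
    (K : ℝ) (hK : 0 < K)
    (hFK : ∀ x ≥ K, F x = F K)
    (hFiK : ∀ i, ∀ x ≥ K, Fi i x = Fi i K)
    (hint : IntegrableOn Real.log (Set.Ioi (0 : ℝ)) F.measure)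
    (hconv : ∀ x, ContinuousAt F x → Tendsto (fun i => Fi i x) l (nhds (F x)))
    (hidet : ∀ i, IntegrableOn Real.log (Set.Ioi (0 : ℝ)) (Fi i).measure ∧
      1 ≤ Real.exp (∫ x in Set.Ioi (0 : ℝ), Real.log x ∂(Fi i).measure)) :
    Tendsto (fun i => Fi i 0) l (nhds (F 0)) ∧
      1 ≤ Real.exp (∫ x in Set.Ioi (0 : ℝ), Real.log x ∂F.measure) := by
  have hb : 1 ≤ K + 1 := by linarith
  have hIoi (G : StieltjesFunction ℝ) (hG : ∀ x ≥ K, G x = G K) :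
      ∫ x in Ioi 0, log x ∂G.measure = ∫ x in Ioc 0 (K + 1), log x ∂G.measure :=
    setIntegral_Ioi_eq_setIntegral_Ioc
      (measure_mono_null (Ioi_subset_Ioi (by linarith)) (G.measure_Ioi_eq_zero_of_forall_ge_eq hG))
  have hFb : ContinuousAt F (K + 1) := F.continuousAt_of_forall_ge_eq hFK (by linarith)
  have hFi i : IntegrableOn log (Ioc 0 (K + 1)) (Fi i).measure :=
    (hidet i).1.mono_set Ioc_subset_Ioi_self
  have hdet i : 0 ≤ ∫ x in Ioc 0 (K + 1), log x ∂(Fi i).measure := by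
    rw [← hIoi (Fi i) (hFiK i), ← one_le_exp_iff]
    exact (hidet i).2
  refine ⟨tendsto_apply_zero_of_setIntegral_log_nonneg hconv hb hFb hFi hdet, ?_⟩
  rw [hIoi F hFK, one_le_exp_iff]
  exact setIntegral_log_Ioc_zero_nonneg hconv hb hFb (hint.mono_set Ioc_subset_Ioi_self) hFi hdet

/-- (Measure-theoretic approximation lemma.)  Let `F : ℝ → [0,∞)` be
monotone nondecreasing and right-continuous (a Stieltjes function), vanishing on `(−∞,0)`,
constant for `λ ≥ K`, with `∫_{0⁺}^∞ ln λ dF > −∞` (integrability of `ln`).  If `(F_i)` is a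
net of such functions with the same bound `K`, converging to `F` at continuity points, and
`exp(∫_{0⁺}^∞ ln λ dF_i) ≥ 1` for all `i`, then `F_i(0) → F(0)` and
`exp(∫_{0⁺}^∞ ln λ dF) ≥ 1`. -/
theorem stmt_18 {ι : Type*} (l : Filter ι) [l.NeBot]
    (F : StieltjesFunction ℝ) (Fi : ι → StieltjesFunction ℝ)
    (K : ℝ) (hK : 0 < K)
    (hFpos : ∀ x, 0 ≤ F x) (hFneg : ∀ x < (0 : ℝ), F x = 0)
    (hFK : ∀ x ≥ K, F x = F K)
    (hFipos : ∀ i x, 0 ≤ Fi i x) (hFineg : ∀ i, ∀ x < (0 : ℝ), Fi i x = 0)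
    (hFiK : ∀ i, ∀ x ≥ K, Fi i x = Fi i K)
    (hint : IntegrableOn Real.log (Set.Ioi (0 : ℝ)) F.measure)
    (hconv : ∀ x, ContinuousAt F x → Tendsto (fun i => Fi i x) l (nhds (F x)))
    (hidet : ∀ i, IntegrableOn Real.log (Set.Ioi (0 : ℝ)) (Fi i).measure ∧
      1 ≤ Real.exp (∫ x in Set.Ioi (0 : ℝ), Real.log x ∂(Fi i).measure)) :
    Tendsto (fun i => Fi i 0) l (nhds (F 0)) ∧
      1 ≤ Real.exp (∫ x in Set.Ioi (0 : ℝ), Real.log x ∂F.measure) :=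
  stmt_18_general l F Fi K hK hFK hFiK hint hconv hidet
end
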